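/- For every natural number n, the integral over the real line of ((H_{2n}(x) - H_{2n}(0))/x)^2 e^{-x^2} dx equals 2√π · (2n)! · [2^{2n} - binom(2n,n)], where H_k denotes the k-th (physicists') Hermite polynomial. -/

import Mathlib

open MeasureTheory Real

/-- The physicists' Hermite polynomials, defined by
`H_{n+1}(x) = 2x H_n(x) - 2n H_{n-1}(x)` with `H_0 = 1`, `H_1 = 2x`. -/
noncomputable def hermiteH : ℕ → ℝ → ℝ
  | 0, _ => 1
  | 1, x => 2 * x
  | n + 2, x => 2 * x * hermiteH (n + 1) x - 2 * ((n : ℝ) + 1) * hermiteH n x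

/-
Write `Φ p = ∫ p(x) e^{-x²} dx` (`gaussianIntegral`) and `Q_m = divX H_m = (H_m - H_m(0)) / X`.
Integration by parts gives `Φ (p H_{m+1}) = Φ (p' H_m)`, so `H_m` is orthogonal to all polynomials
of lower degree and `Φ (H_m²) = √π 2^m m!`. The three-term recurrence passes to the quotients as
`Q_{m+2} = 2 H_{m+1} - 2(m+1) Q_m`, whose two terms are orthogonal since `deg Q_m < m + 1`; hence
`Φ (Q_{m+2}²) = 4 Φ (H_{m+1}²) + 4(m+1)² Φ (Q_m²)`. Solving this recurrence from `Q_0 = 0` gives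
the closed form, via `(n+1) C(2n+2, n+1) = 2(2n+1) C(2n, n)`.
-/

open Polynomial

theorem Polynomial.eval_divX {K : Type*} [Field K] (p : K[X]) {x : K} (hx : x ≠ 0) :
    p.divX.eval x = (p.eval x - p.eval 0) / x := by
  have h := congrArg (eval x) (X_mul_divX_add p)
  rw [eval_add, eval_mul, eval_X, eval_C] at h
  rw [eq_div_iff hx, ← coeff_zero_eq_eval_zero]
  linear_combination h

-- Mathlib's `Polynomial.hermite` is the probabilists' normalization `He_n`.
noncomputable def physHermite : ℕ → ℝ[X]
  | 0 => 1
  | 1 => C 2 * X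
  | n + 2 => C 2 * X * physHermite (n + 1) - C (2 * ((n : ℝ) + 1)) * physHermite n

namespace physHermite

theorem succ_succ (n : ℕ) :
    physHermite (n + 2) = C 2 * X * physHermite (n + 1) - C (2 * ((n : ℝ) + 1)) * physHermite n :=
  rfl

theorem eval_eq_hermiteH : ∀ (n : ℕ) (x : ℝ), (physHermite n).eval x = hermiteH n x
  | 0, x => by simp [physHermite, hermiteH]
  | 1, x => by simp [physHermite, hermiteH]
  | n + 2, x => by simp [physHermite, hermiteH, eval_eq_hermiteH (n + 1) x, eval_eq_hermiteH n x]

theorem derivative_succ :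
    ∀ n : ℕ, derivative (physHermite (n + 1)) = C (2 * ((n : ℝ) + 1)) * physHermite n
  | 0 => by simp [physHermite]
  | 1 => by
    simp only [physHermite, derivative_sub, derivative_mul, derivative_C, derivative_X,
      derivative_one]
    simp only [map_mul, map_add, map_natCast, map_ofNat, map_one]
    ring
  | n + 2 => by
    rw [succ_succ, derivative_sub, derivative_mul, derivative_mul, derivative_C_mul,
      derivative_succ (n + 1), derivative_succ n, succ_succ n]
    simp only [derivative_C, derivative_X, zero_mul, zero_add, mul_one]
    simp only [map_mul, map_add, map_natCast, map_ofNat, map_one]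
    push_cast
    ring

theorem succ_eq_sub_derivative (n : ℕ) :
    physHermite (n + 1) = C 2 * X * physHermite n - derivative (physHermite n) := by
  cases n with
  | zero => simp [physHermite]
  | succ n => rw [succ_succ, derivative_succ]

theorem natDegree_le : ∀ n : ℕ, (physHermite n).natDegree ≤ n
  | 0 => by simp [physHermite]
  | 1 => (natDegree_C_mul_X 2 two_ne_zero).le
  | n + 2 => by
    have h₁ :=
      natDegree_mul_le_of_le (natDegree_C_mul_X (2 : ℝ) two_ne_zero).le (natDegree_le (n + 1))
    have h₂ := (natDegree_C_mul_le (2 * ((n : ℝ) + 1)) _).trans (natDegree_le n)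
    rw [succ_succ]
    exact (natDegree_sub_le_of_le h₁ h₂).trans (by omega)

theorem divX_succ_succ (n : ℕ) :
    (physHermite (n + 2)).divX
      = C 2 * physHermite (n + 1) - C (2 * ((n : ℝ) + 1)) * (physHermite n).divX := by
  ext k
  simp only [succ_succ, coeff_divX, coeff_sub, mul_assoc, coeff_C_mul, coeff_X_mul]

end physHermite

theorem integrable_eval_mul_exp_neg_sq (p : ℝ[X]) :
    Integrable fun x : ℝ ↦ p.eval x * exp (-x ^ 2) := by
  induction p using Polynomial.induction_on' with
  | add p q hp hq => simpa [add_mul] using hp.fun_add hq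
  | monomial k a =>
    have hk := integrable_rpow_mul_exp_neg_mul_sq one_pos (s := k)
      (by linarith [k.cast_nonneg (α := ℝ)])
    simpa [mul_assoc] using hk.const_mul a

theorem hasDerivAt_eval_mul_exp_neg_sq (p : ℝ[X]) (x : ℝ) :
    HasDerivAt (fun x : ℝ ↦ p.eval x * exp (-x ^ 2))
      ((derivative p - C 2 * X * p).eval x * exp (-x ^ 2)) x := by
  have hexp : HasDerivAt (fun x : ℝ ↦ exp (-x ^ 2)) (exp (-x ^ 2) * -(2 * x)) x := by
    simpa using ((hasDerivAt_pow 2 x).neg).exp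
  refine ((p.hasDerivAt x).fun_mul hexp).congr_deriv ?_
  simp only [eval_sub, eval_mul, eval_C, eval_X]
  ring

noncomputable def gaussianIntegral : ℝ[X] →ₗ[ℝ] ℝ where
  toFun p := ∫ x, p.eval x * exp (-x ^ 2)
  map_add' p q := by
    simp only [eval_add, add_mul]
    exact integral_add (integrable_eval_mul_exp_neg_sq p) (integrable_eval_mul_exp_neg_sq q)
  map_smul' a p := by simp [mul_assoc, integral_const_mul]

theorem gaussianIntegral_apply (p : ℝ[X]) :
    gaussianIntegral p = ∫ x, p.eval x * exp (-x ^ 2) := rfl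

theorem gaussianIntegral_one : gaussianIntegral 1 = √π := by
  simpa [gaussianIntegral_apply] using integral_gaussian 1

theorem gaussianIntegral_C_mul (a : ℝ) (p : ℝ[X]) :
    gaussianIntegral (C a * p) = a * gaussianIntegral p := by
  rw [C_mul', map_smul, smul_eq_mul]

theorem gaussianIntegral_derivative (p : ℝ[X]) :
    gaussianIntegral (derivative p) = gaussianIntegral (C 2 * X * p) := by
  rw [← sub_eq_zero, ← map_sub]
  exact integral_eq_zero_of_hasDerivAt_of_integrable (hasDerivAt_eval_mul_exp_neg_sq p)
    (integrable_eval_mul_exp_neg_sq _) (integrable_eval_mul_exp_neg_sq p)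

theorem gaussianIntegral_mul_physHermite_succ (p : ℝ[X]) (m : ℕ) :
    gaussianIntegral (p * physHermite (m + 1))
      = gaussianIntegral (derivative p * physHermite m) := by
  have hibp := gaussianIntegral_derivative (p * physHermite m)
  rw [derivative_mul, map_add] at hibp
  rw [physHermite.succ_eq_sub_derivative, mul_sub, map_sub, mul_left_comm, ← hibp]
  ring

theorem gaussianIntegral_mul_physHermite_eq_zero {p : ℝ[X]} {m : ℕ} (h : p.natDegree < m) :
    gaussianIntegral (p * physHermite m) = 0 := by
  induction m generalizing p with
  | zero => omega
  | succ m ih =>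
    rw [gaussianIntegral_mul_physHermite_succ]
    rcases Nat.eq_zero_or_pos p.natDegree with hp | hp
    · simp [derivative_of_natDegree_zero hp]
    · exact ih ((natDegree_derivative_le p).trans_lt (by omega))

theorem gaussianIntegral_physHermite_mul_self (m : ℕ) :
    gaussianIntegral (physHermite m * physHermite m) = √π * 2 ^ m * m.factorial := by
  induction m with
  | zero => simpa [physHermite] using gaussianIntegral_one
  | succ m ih =>
    rw [gaussianIntegral_mul_physHermite_succ, physHermite.derivative_succ, mul_assoc,
      gaussianIntegral_C_mul, ih, Nat.factorial_succ]
    push_cast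
    ring

theorem gaussianIntegral_divX_physHermite_sq_succ_succ (m : ℕ) :
    gaussianIntegral ((physHermite (m + 2)).divX ^ 2)
      = 4 * gaussianIntegral (physHermite (m + 1) * physHermite (m + 1))
        + 4 * ((m : ℝ) + 1) ^ 2 * gaussianIntegral ((physHermite m).divX ^ 2) := by
  have horth : gaussianIntegral ((physHermite m).divX * physHermite (m + 1)) = 0 :=
    gaussianIntegral_mul_physHermite_eq_zero
      (natDegree_divX_le.trans_lt ((physHermite.natDegree_le m).trans_lt m.lt_succ_self))
  have hexpand : (physHermite (m + 2)).divX ^ 2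
      = C 4 * (physHermite (m + 1) * physHermite (m + 1))
        - C (8 * ((m : ℝ) + 1)) * ((physHermite m).divX * physHermite (m + 1))
        + C (4 * ((m : ℝ) + 1) ^ 2) * (physHermite m).divX ^ 2 := by
    rw [physHermite.divX_succ_succ]
    simp only [map_mul, map_add, map_pow, map_natCast, map_ofNat, map_one]
    ring
  rw [hexpand, map_add, map_sub, gaussianIntegral_C_mul, gaussianIntegral_C_mul,
    gaussianIntegral_C_mul, horth]
  ring

theorem gaussianIntegral_divX_physHermite_two_mul_sq (n : ℕ) :
    gaussianIntegral ((physHermite (2 * n)).divX ^ 2)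
      = 2 * √π * (2 * n).factorial * (2 ^ (2 * n) - (2 * n).choose n) := by
  induction n with
  | zero => simp [physHermite]
  | succ n ih =>
    have hchoose : ((n : ℝ) + 1) * (2 * n + 2).choose (n + 1)
        = 2 * (2 * n + 1) * (2 * n).choose n := by
      have h := n.succ_mul_centralBinom_succ
      simp only [Nat.centralBinom_eq_two_mul_choose, show 2 * (n + 1) = 2 * n + 2 by ring] at h
      exact_mod_cast h
    rw [show 2 * (n + 1) = 2 * n + 2 by ring, gaussianIntegral_divX_physHermite_sq_succ_succ, ih,
      gaussianIntegral_physHermite_mul_self]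
    simp only [Nat.factorial_succ]
    push_cast
    linear_combination (4 * √π * (2 * n + 1) * (2 * n).factorial) * hchoose

theorem hermite_even_filter_integral (n : ℕ) :
    ∫ x : ℝ, ((hermiteH (2 * n) x - hermiteH (2 * n) 0) / x) ^ 2 * Real.exp (-x ^ 2)
      = 2 * Real.sqrt π * ((2 * n).factorial : ℝ) * (2 ^ (2 * n) - ((2 * n).choose n : ℝ)) := by
  have hae : ∀ᵐ x : ℝ, ((physHermite (2 * n)).divX ^ 2).eval x * exp (-x ^ 2)
      = ((hermiteH (2 * n) x - hermiteH (2 * n) 0) / x) ^ 2 * exp (-x ^ 2) := by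
    filter_upwards [compl_mem_ae_iff.mpr (measure_singleton (0 : ℝ))] with x hx
    rw [eval_pow, eval_divX _ hx, physHermite.eval_eq_hermiteH, physHermite.eval_eq_hermiteH]
  rw [← gaussianIntegral_divX_physHermite_two_mul_sq, gaussianIntegral_apply]
  exact (integral_congr_ae hae).symm
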